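/- Let A be a set of k ≥ 4 nonnegative integers with 0 ∈ A, let r be a positive integer, and let H = {h_1, …, h_t} be a set of t ≥ 1 positive integers with (k−2)r ≤ h_1 < h_2 < ⋯ < h_t ≤ (k−1)r. Then |H^{(r)}A| ≥ m_1·r·(k − m_1) + (h_1 − m_1·r)·(k − 2m_1 − 1) + t, where m_1 = ⌊h_1/r⌋. -/

import Mathlib

/-- The generalized `h`-fold sumset `h^(r)A`: all sums of `h` elements of `A`
where every summand appears at most `r` times. -/
def genSumset (r h : ℕ) (A : Finset ℤ) : Set ℤ :=
  {x | ∃ lam : ℤ → ℕ, (∀ a, lam a ≤ r) ∧ (∀ a ∉ A, lam a = 0) ∧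
    (∑ a ∈ A, lam a) = h ∧ (∑ a ∈ A, (lam a : ℤ) * a) = x}

/-- The generalized `H`-fold sumset `H^(r)A = ⋃_{h ∈ H} h^(r)A`. -/
def HSumset (r : ℕ) (H : Finset ℕ) (A : Finset ℤ) : Set ℤ :=
  ⋃ h ∈ H, genSumset r h A

/-!
Write `a 0 < a 1 < ⋯ < a (k-1)` for the elements of `A`. Replacing each multiplicity `λ` by
`r - λ` maps `h^(r)A` injectively into `(kr - h)^(r)A`, so it suffices to count the sums with
`g = kr - h ∈ [r, 2r]` summands. For `g = r + u`, where `u = (k-1)r - h₁`, start from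
`r·a 0 + u·a 1` and repeatedly move one summand to the next larger element of `A`: for each `J`
the `u` copies step from `a (J+1)` to `a (J+2)` and then the `r` copies from `a J` to `a (J+1)`;
at the end `r - u` copies step from `a (k-2)` to `a (k-1)`. Every move increases the sum, giving
`r(k-1) + u(k-3) + 1` distinct sums. Each larger `h ∈ H` contributes `r·a 0 + ((k-1)r - h)·a 1`,
which lies below `r·a 0 + u·a 1` because `a 1 > 0`.
-/

open Finset

section Sumset

variable {r : ℕ} {A : Finset ℤ}

theorem genSumset_subset_Icc (g : ℕ) :
    genSumset r g A ⊆ Set.Icc (-(r * ∑ a ∈ A, |a|)) (r * ∑ a ∈ A, |a|) := by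
  rintro _ ⟨lam, hlam, -, -, rfl⟩
  rw [Set.mem_Icc, ← abs_le, Finset.mul_sum]
  refine (abs_sum_le_sum_abs _ _).trans (sum_le_sum fun a _ => ?_)
  rw [abs_mul, Nat.abs_cast]
  exact mul_le_mul_of_nonneg_right (by exact_mod_cast hlam a) (abs_nonneg a)

theorem genSumset_finite (g : ℕ) : (genSumset r g A).Finite :=
  (Set.finite_Icc _ _).subset (genSumset_subset_Icc g)

theorem HSumset_finite (H : Finset ℕ) : (HSumset r H A).Finite :=
  H.finite_toSet.biUnion fun g _ => genSumset_finite g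

theorem sub_mem_genSumset_card_mul_sub {g : ℕ} {x : ℤ} (hx : x ∈ genSumset r g A) :
    r * ∑ a ∈ A, a - x ∈ genSumset r (A.card * r - g) A := by
  obtain ⟨lam, hlam, hlamA, rfl, rfl⟩ := hx
  refine ⟨fun a => if a ∈ A then r - lam a else 0, fun a => ?_, fun a ha => if_neg ha, ?_, ?_⟩
  · dsimp only
    split_ifs <;> omega
  · rw [sum_ite_mem, inter_self, eq_tsub_iff_add_eq_of_le, ← sum_add_distrib,
      sum_congr rfl fun a _ => Nat.sub_add_cancel (hlam a), sum_const, smul_eq_mul]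
    exact (sum_le_sum fun a _ => hlam a).trans (by simp)
  · rw [Finset.mul_sum, ← sum_sub_distrib]
    refine sum_congr rfl fun a ha => ?_
    push_cast [if_pos ha, hlam a]
    ring

theorem add_add_mem_genSumset {x y z : ℤ} (hx : x ∈ A) (hy : y ∈ A) (hz : z ∈ A)
    (hxy : x ≠ y) (hxz : x ≠ z) (hyz : y ≠ z) {p q s : ℕ} (hp : p ≤ r) (hq : q ≤ r)
    (hs : s ≤ r) : p * x + q * y + s * z ∈ genSumset r (p + q + s) A := by
  classical
  refine ⟨Pi.single x p + Pi.single y q + Pi.single z s, fun a => ?_, fun a ha => ?_, ?_, ?_⟩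
  · by_cases hax : a = x <;> by_cases hay : a = y <;> by_cases haz : a = z <;>
      simp_all
  · simp [(ne_of_mem_of_not_mem hx ha).symm, (ne_of_mem_of_not_mem hy ha).symm,
      (ne_of_mem_of_not_mem hz ha).symm]
  · simp [sum_add_distrib, hx, hy, hz]
  · simp only [Pi.add_apply, Nat.cast_add, add_mul, sum_add_distrib]
    simp [Pi.single_apply, hx, hy, hz]

theorem ncard_biUnion_genSumset_card_mul_sub_le {H : Finset ℕ}
    (hH : ∀ g ∈ H, g ≤ A.card * r) :
    (⋃ g ∈ H, genSumset r (A.card * r - g) A).ncard ≤ (HSumset r H A).ncard := by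
  refine Set.ncard_le_ncard_of_injOn (fun x => r * ∑ a ∈ A, a - x) (fun x hx => ?_)
    (sub_right_injective.injOn) (HSumset_finite H)
  obtain ⟨g, hg, hx⟩ := Set.mem_iUnion₂.1 hx
  refine Set.mem_biUnion hg ?_
  simpa [Nat.sub_sub_self (hH g hg)] using sub_mem_genSumset_card_mul_sub hx

end Sumset

theorem Finset.exists_strictMonoOn_Iio_mem {α : Type*} [LinearOrder α] [Inhabited α]
    {s : Finset α} {k : ℕ} (hs : s.card = k) :
    ∃ a : ℕ → α, StrictMonoOn a (Set.Iio k) ∧ ∀ i < k, a i ∈ s := by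
  refine ⟨fun i => if hi : i < k then s.orderEmbOfFin hs ⟨i, hi⟩ else default,
    fun i hi j hj hij => ?_, fun i hi => ?_⟩
  · simp only [Set.mem_Iio] at hi hj
    simpa [hi, hj] using
      (s.orderEmbOfFin hs).strictMono (show (⟨i, hi⟩ : Fin k) < ⟨j, hj⟩ from hij)
  · simp [hi]

def HasPointsIco (S : Set ℤ) (N : ℕ) (x y : ℤ) : Prop :=
  x ≤ y ∧ N ≤ (S ∩ Set.Ico x y).ncard

namespace HasPointsIco

variable {S T : Set ℤ} {M N : ℕ} {x y z : ℤ}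

theorem trans (hxy : HasPointsIco S M x y) (hyz : HasPointsIco S N y z) :
    HasPointsIco S (M + N) x z := by
  refine ⟨hxy.1.trans hyz.1, ?_⟩
  rw [← Set.Ico_union_Ico_eq_Ico hxy.1 hyz.1, Set.inter_union_distrib_left,
    Set.ncard_union_eq (Set.Ico_disjoint_Ico_same.mono
      Set.inter_subset_right Set.inter_subset_right)
      ((Set.finite_Ico x y).inter_of_right S) ((Set.finite_Ico y z).inter_of_right S)]
  exact add_le_add hxy.2 hyz.2

theorem mono (h : HasPointsIco S N x y) (hST : S ⊆ T) : HasPointsIco T N x y :=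
  ⟨h.1, h.2.trans (Set.ncard_le_ncard (Set.inter_subset_inter_left _ hST)
    ((Set.finite_Ico x y).inter_of_right T))⟩

theorem le_ncard (h : HasPointsIco S N x y) (hS : S.Finite) : N ≤ S.ncard :=
  h.2.trans (Set.ncard_le_ncard Set.inter_subset_left hS)

end HasPointsIco

theorem hasPointsIco_of_injOn {S : Set ℤ} {x y : ℤ} (hxy : x ≤ y) {ι : Type*} {s : Set ι}
    (f : ι → ℤ) (hf : ∀ i ∈ s, f i ∈ S ∧ x ≤ f i ∧ f i < y) (hinj : Set.InjOn f s) :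
    HasPointsIco S s.ncard x y :=
  ⟨hxy, Set.ncard_le_ncard_of_injOn f (fun i hi => ⟨(hf i hi).1, (hf i hi).2⟩) hinj
    ((Set.finite_Ico x y).inter_of_right S)⟩

theorem hasPointsIco_add_mul {S : Set ℤ} {x d : ℤ} {m : ℕ} (hd : 0 < d)
    (h : ∀ n < m, x + n * d ∈ S) : HasPointsIco S m x (x + m * d) := by
  have hmono : StrictMono fun n : ℕ => x + n * d := fun i j hij => by
    simpa using mul_lt_mul_of_pos_right (Nat.cast_lt.2 hij) hd
  have hle : ∀ n : ℕ, x ≤ x + n * d := fun n => by simpa using hmono.monotone n.zero_le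
  simpa using hasPointsIco_of_injOn (s := Set.Iio m) (hle m) _
    (fun n hn => ⟨h n hn, hle n, hmono hn⟩) hmono.injective.injOn

theorem hasPointsIco_one {S : Set ℤ} {x : ℤ} (hx : x ∈ S) : HasPointsIco S 1 x (x + 1) := by
  simpa using hasPointsIco_add_mul one_pos (m := 1) (by simpa using hx)

section Chain

variable {r : ℕ} {A : Finset ℤ}

theorem hasPointsIco_genSumset_move {x y z : ℤ} (hx : x ∈ A) (hy : y ∈ A) (hz : z ∈ A)
    (hxy : x ≠ y) (hxz : x ≠ z) (hyz : y < z) {p q s m : ℕ} (hp : p ≤ r) (hq : q + m ≤ r)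
    (hs : s + m ≤ r) :
    HasPointsIco (genSumset r (p + q + s + m) A) m (p * x + (q + m) * y + s * z)
      (p * x + q * y + (s + m) * z) := by
  convert hasPointsIco_add_mul (sub_pos.2 hyz) fun n (hn : n < m) => ?_ using 1
  · ring
  convert add_add_mem_genSumset hx hy hz hxy hxz hyz.ne hp (q := q + (m - n)) (s := s + n)
    (by omega) (by omega) using 1
  · congr 1
    omega
  · push_cast [Nat.cast_sub hn.le]
    ring

variable {k u : ℕ} {a : ℕ → ℤ}

theorem hasPointsIco_genSumset_rounds (ha : StrictMonoOn a (Set.Iio k)) (hA : ∀ i < k, a i ∈ A)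
    (hu : u ≤ r) {J : ℕ} (hJ : J + 2 ≤ k) :
    HasPointsIco (genSumset r (r + u) A) ((r + u) * J) (r * a 0 + u * a 1)
      (r * a J + u * a (J + 1)) := by
  induction J with
  | zero => exact ⟨le_rfl, by simp⟩
  | succ J ih =>
    have hlt : ∀ {i j}, i < j → j < k → a i < a j := fun hij hj =>
      ha (show _ < k by omega) hj hij
    have moveU := hasPointsIco_genSumset_move (hA J (by omega)) (hA (J + 1) (by omega))
      (hA (J + 2) (by omega)) (hlt (by omega) (by omega)).ne
      (hlt (by omega) (by omega)).ne (hlt (by omega) (by omega)) le_rfl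
      (p := r) (q := 0) (s := 0) (m := u) (by omega) (by omega)
    have moveR := hasPointsIco_genSumset_move (hA (J + 2) (by omega)) (hA J (by omega))
      (hA (J + 1) (by omega)) (hlt (by omega) (by omega)).ne'
      (hlt (by omega) (by omega)).ne' (hlt (by omega) (by omega)) hu
      (p := u) (q := 0) (s := 0) (m := r) (by omega) (by omega)
    simp only [add_zero, zero_add, zero_mul, CharP.cast_eq_zero] at moveU moveR
    rw [add_comm u, add_comm (u * a (J + 2)), add_comm (u * a (J + 2))] at moveR
    convert (ih (by omega)).trans (moveU.trans moveR) using 1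
    ring

theorem hasPointsIco_genSumset_chain (ha : StrictMonoOn a (Set.Iio k)) (hA : ∀ i < k, a i ∈ A)
    (hk : 3 ≤ k) (hu : u ≤ r) :
    HasPointsIco (genSumset r (r + u) A) ((r + u) * (k - 2) + (r - u) + 1)
      (r * a 0 + u * a 1) (u * a (k - 2) + r * a (k - 1) + 1) := by
  obtain ⟨K, rfl⟩ := Nat.exists_eq_add_of_le' hk
  obtain ⟨v, rfl⟩ := Nat.exists_eq_add_of_le hu
  have hlt : ∀ {i j}, i < j → j < K + 3 → a i < a j := fun hij hj =>
    ha (show _ < K + 3 by omega) hj hij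
  have last := hasPointsIco_genSumset_move (hA 0 (by omega)) (hA (K + 1) (by omega))
    (hA (K + 2) (by omega)) (hlt (by omega) (by omega)).ne
    (hlt (by omega) (by omega)).ne (hlt (by omega) (by omega)) (Nat.zero_le _)
    (r := u + v) (p := 0) (q := u) (s := u) (m := v) (by omega) (by omega)
  have top := add_add_mem_genSumset (hA 0 (by omega)) (hA (K + 1) (by omega))
    (hA (K + 2) (by omega)) (hlt (by omega) (by omega)).ne
    (hlt (by omega) (by omega)).ne (hlt (by omega) (by omega)).ne (Nat.zero_le _)
    (r := u + v) (p := 0) (q := u) (s := u + v) (by omega) le_rfl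
  simp only [CharP.cast_eq_zero, zero_mul, zero_add] at last top
  have rounds := hasPointsIco_genSumset_rounds ha hA hu (J := K + 1) (by omega)
  rw [show u + u + v = u + v + u by ring] at last
  rw [show u + (u + v) = u + v + u by ring] at top
  rw [show K + 3 - 2 = K + 1 by omega, show K + 3 - 1 = K + 1 + 1 by omega,
    Nat.add_sub_cancel_left]
  push_cast at rounds top ⊢
  exact (rounds.trans last).trans (hasPointsIco_one top)

end Chain

theorem hasPointsIco_biUnion_genSumset {r k h₁ : ℕ} {A : Finset ℤ} {H : Finset ℕ} {a : ℕ → ℤ}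
    (ha : StrictMonoOn a (Set.Iio k)) (hA : ∀ i < k, a i ∈ A) (hk : 3 ≤ k) (ha₀ : 0 ≤ a 0)
    (hlow : (k - 2) * r ≤ h₁) (hH : ∀ g ∈ H, h₁ ≤ g ∧ g ≤ (k - 1) * r) :
    HasPointsIco (⋃ g ∈ H, genSumset r (k * r - g) A) (H.erase h₁).card (r * a 0)
      (r * a 0 + ((k - 1) * r - h₁ : ℕ) * a 1) := by
  have hlt : ∀ {i j}, i < j → j < k → a i < a j := fun hij hj =>
    ha (show _ < k by omega) hj hij
  have ha₁ : 0 < a 1 := ha₀.trans_lt (hlt one_pos (by omega))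
  have hk₁ : k * r = (k - 1) * r + r := by rw [← Nat.succ_mul]; congr; omega
  have hk₂ : (k - 1) * r = (k - 2) * r + r := by rw [← Nat.succ_mul]; congr; omega
  rw [← Set.ncard_coe_finset]
  refine hasPointsIco_of_injOn (by simpa using mul_nonneg (Nat.cast_nonneg _) ha₁.le)
    (fun g : ℕ => r * a 0 + ((k - 1) * r - g : ℕ) * a 1) (fun g hg => ?_) fun g hg g' hg' h => ?_
  · obtain ⟨hgh₁, hg⟩ := mem_erase.1 hg
    have := hH g hg
    refine ⟨Set.mem_biUnion hg ?_, ?_, ?_⟩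
    · rw [show k * r - g = r + ((k - 1) * r - g) + 0 by omega]
      simpa using add_add_mem_genSumset (hA 0 (by omega)) (hA 1 (by omega)) (hA 2 (by omega))
        (hlt (by omega) (by omega)).ne (hlt (by omega) (by omega)).ne
        (hlt (by omega) (by omega)).ne le_rfl (q := (k - 1) * r - g) (by omega) (Nat.zero_le r)
    · simpa using mul_nonneg (Nat.cast_nonneg _) ha₁.le
    · simpa using mul_lt_mul_of_pos_right (Nat.cast_lt.2 (by omega)) ha₁
  · have := hH g (mem_of_mem_erase hg)
    have := hH g' (mem_of_mem_erase hg')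
    simp [ha₁.ne'] at h
    omega

theorem card_le_ncard_HSumset {k r h₁ : ℕ} {A : Finset ℤ} {H : Finset ℕ} (hAcard : A.card = k)
    (hk : 3 ≤ k) (hA : ∀ a ∈ A, 0 ≤ a) (hh₁ : h₁ ∈ H) (hlow : (k - 2) * r ≤ h₁)
    (hH : ∀ g ∈ H, h₁ ≤ g ∧ g ≤ (k - 1) * r) :
    (k * r - h₁) * (k - 2) + (h₁ - (k - 2) * r) + H.card ≤ (HSumset r H A).ncard := by
  obtain ⟨a, ha, haA⟩ := A.exists_strictMonoOn_Iio_mem hAcard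
  have hk₁ : k * r = (k - 1) * r + r := by rw [← Nat.succ_mul]; congr; omega
  have hk₂ : (k - 1) * r = (k - 2) * r + r := by rw [← Nat.succ_mul]; congr; omega
  have hh₁le := (hH h₁ hh₁).2
  obtain ⟨u, hu⟩ : ∃ u, (k - 1) * r - h₁ = u := ⟨_, rfl⟩
  have hg₁ : k * r - h₁ = r + u := by omega
  have hlower := hasPointsIco_biUnion_genSumset ha haA hk (hA _ (haA 0 (by omega))) hlow hH
  have hchain := (hasPointsIco_genSumset_chain ha haA hk (show u ≤ r by omega)).mono
    (hg₁ ▸ Set.subset_biUnion_of_mem (u := fun g => genSumset r (k * r - g) A) hh₁)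
  rw [hu] at hlower
  have hreflect := ncard_biUnion_genSumset_card_mul_sub_le (r := r) (A := A) (H := H)
    fun g hg => by have := hH g hg; rw [hAcard]; omega
  rw [hAcard] at hreflect
  have hcount := ((hlower.trans hchain).le_ncard
    (H.finite_toSet.biUnion fun g _ => genSumset_finite _)).trans hreflect
  rw [card_erase_of_mem hh₁] at hcount
  have := card_pos.2 ⟨h₁, hh₁⟩
  rw [hg₁, show h₁ - (k - 2) * r = r - u by omega]
  omega

theorem bound_with_floor_eq {k r h : ℕ} (hr : 0 < r) (hk : 2 ≤ k) (hlow : (k - 2) * r ≤ h)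
    (hhigh : h ≤ (k - 1) * r) :
    ((h / r : ℕ) : ℤ) * r * ((k : ℤ) - (h / r : ℕ))
      + ((h : ℤ) - (h / r : ℕ) * r) * ((k : ℤ) - 2 * (h / r : ℕ) - 1)
      = ((k * r - h) * (k - 2) + (h - (k - 2) * r) : ℕ) := by
  obtain ⟨K, rfl⟩ := Nat.exists_eq_add_of_le' hk
  simp only [Nat.add_sub_cancel, show K + 2 - 1 = K + 1 by omega] at hlow hhigh ⊢
  have hdiv : K ≤ h / r ∧ h / r ≤ K + 1 :=
    ⟨(Nat.le_div_iff_mul_le hr).2 hlow, Nat.div_le_of_le_mul (by linarith)⟩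
  have hkr : h ≤ (K + 2) * r := by nlinarith
  obtain hm | hm : h / r = K ∨ h / r = K + 1 := by omega
  · rw [hm]
    push_cast [Nat.cast_sub hlow, Nat.cast_sub hkr]
    ring
  · have : h = (K + 1) * r := le_antisymm hhigh (by rw [← hm]; exact Nat.div_mul_le_self h r)
    rw [hm]
    subst this
    push_cast [Nat.cast_sub hlow, Nat.cast_sub hkr]
    ring

theorem stmt_4_general (k t r : ℕ) (A : Finset ℤ) (H : Finset ℕ) (h : ℕ → ℕ)
    (hk : 4 ≤ k) (hAcard : A.card = k) (hAnonneg : ∀ a ∈ A, 0 ≤ a)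
    (hr1 : 1 ≤ r) (ht : 1 ≤ t) (hHcard : H.card = t)
    (hmono : StrictMonoOn h (Set.Icc 1 t))
    (hHim : H = (Finset.Icc 1 t).image h)
    (hlow : (k - 2) * r ≤ h 1) (hmax : h t ≤ (k - 1) * r) :
    ((h 1 / r : ℕ) : ℤ) * r * ((k : ℤ) - ((h 1 / r : ℕ) : ℤ))
      + ((h 1 : ℤ) - ((h 1 / r : ℕ) : ℤ) * r) * ((k : ℤ) - 2 * ((h 1 / r : ℕ) : ℤ) - 1)
      + t ≤ ((HSumset r H A).ncard : ℤ) := by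
  have hone : 1 ∈ Set.Icc 1 t := ⟨le_rfl, ht⟩
  have hh₁ : h 1 ∈ H := hHim ▸ mem_image_of_mem h (by simpa using hone)
  have hH : ∀ g ∈ H, h 1 ≤ g ∧ g ≤ (k - 1) * r := by
    intro g hg
    obtain ⟨i, hi, rfl⟩ := mem_image.1 (hHim ▸ hg)
    have hi : i ∈ Set.Icc 1 t := by simpa using hi
    exact ⟨hmono.monotoneOn hone hi hi.1, (hmono.monotoneOn hi ⟨ht, le_rfl⟩ hi.2).trans hmax⟩
  rw [bound_with_floor_eq hr1 (by omega) hlow (hH _ hh₁).2, ← hHcard]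
  exact_mod_cast card_le_ncard_HSumset hAcard (by omega) hAnonneg hh₁ hlow hH

theorem stmt_4 (k t r : ℕ) (A : Finset ℤ) (H : Finset ℕ) (h : ℕ → ℕ)
    (hk : 4 ≤ k) (hAcard : A.card = k) (hAnonneg : ∀ a ∈ A, 0 ≤ a) (h0A : (0 : ℤ) ∈ A)
    (hr1 : 1 ≤ r) (ht : 1 ≤ t) (hHcard : H.card = t) (hHpos : ∀ x ∈ H, 0 < x)
    (hmono : StrictMonoOn h (Set.Icc 1 t))
    (hHim : H = (Finset.Icc 1 t).image h)
    (hlow : (k - 2) * r ≤ h 1) (hmax : h t ≤ (k - 1) * r) :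
    ((h 1 / r : ℕ) : ℤ) * r * ((k : ℤ) - ((h 1 / r : ℕ) : ℤ))
      + ((h 1 : ℤ) - ((h 1 / r : ℕ) : ℤ) * r) * ((k : ℤ) - 2 * ((h 1 / r : ℕ) : ℤ) - 1)
      + t ≤ ((HSumset r H A).ncard : ℤ) :=
  stmt_4_general k t r A H h hk hAcard hAnonneg hr1 ht hHcard hmono hHim hlow hmax
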